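/- arXiv:1612.07516 — 3 statements merged into one kernel-verified Lean document; each statement's English description precedes it below -/
import Mathlib

section
/- Let X = (x_1,…,x_N) and Y = (y_1,…,y_N) be tuples of points in ℝ^D, M ⊂ ℝ^D a finite nonempty set, and ε ∈ (0,1]. Define φ(Z, M) = Σ_n min over membership vectors r_n ∈ Δ (the simplex over M) of Σ_{μ∈M} r_n(μ)^m ‖z_n − μ‖², for a fixed constant m > 1. Then |φ(X, M) − φ(Y, M)| ≤ (1 + 1/ε) Σ_n ‖x_n − y_n‖² + ε · min{φ(X, M), φ(Y, M)}. -/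
open scoped BigOperators

/-- Optimal fuzzy cost of a single point `x` with respect to a finite set of means `M`,
with fuzzifier `m`: the infimum over membership vectors (nonnegative, summing to 1)
of `∑ r(μ)^m ‖x - μ‖²`. -/
noncomputable def pointCost {D : ℕ} (m : ℝ) (M : Finset (EuclideanSpace ℝ (Fin D)))
    (x : EuclideanSpace ℝ (Fin D)) : ℝ :=
  sInf { c : ℝ | ∃ r : EuclideanSpace ℝ (Fin D) → ℝ,
    (∀ μ ∈ M, 0 ≤ r μ) ∧ (∑ μ ∈ M, r μ) = 1 ∧
    c = ∑ μ ∈ M, r μ ^ m * ‖x - μ‖ ^ 2 }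

lemma pointCost_set_nonneg {D : ℕ} (m : ℝ) (M : Finset (EuclideanSpace ℝ (Fin D)))
    (x : EuclideanSpace ℝ (Fin D)) :
    ∀ c ∈ { c : ℝ | ∃ r : EuclideanSpace ℝ (Fin D) → ℝ,
      (∀ μ ∈ M, 0 ≤ r μ) ∧ (∑ μ ∈ M, r μ) = 1 ∧
      c = ∑ μ ∈ M, r μ ^ m * ‖x - μ‖ ^ 2 }, 0 ≤ c := by
  rintro c ⟨r, h0, h1, rfl⟩
  apply Finset.sum_nonneg
  intro μ hμ
  have := Real.rpow_nonneg (h0 μ hμ) m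
  positivity

lemma pointCost_nonneg {D : ℕ} (m : ℝ) (M : Finset (EuclideanSpace ℝ (Fin D)))
    (x : EuclideanSpace ℝ (Fin D)) : 0 ≤ pointCost m M x :=
  Real.sInf_nonneg (pointCost_set_nonneg m M x)

lemma pointCost_le {D : ℕ} (m : ℝ) (hm : 1 < m) (M : Finset (EuclideanSpace ℝ (Fin D)))
    (hM : M.Nonempty) (x y : EuclideanSpace ℝ (Fin D)) (ε : ℝ) (hε : 0 < ε) :
    pointCost m M x ≤ (1 + ε) * pointCost m M y + (1 + 1 / ε) * ‖x - y‖ ^ 2 := by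
  set Sx := { c : ℝ | ∃ r : EuclideanSpace ℝ (Fin D) → ℝ,
    (∀ μ ∈ M, 0 ≤ r μ) ∧ (∑ μ ∈ M, r μ) = 1 ∧
    c = ∑ μ ∈ M, r μ ^ m * ‖x - μ‖ ^ 2 } with hSx
  set Sy := { c : ℝ | ∃ r : EuclideanSpace ℝ (Fin D) → ℝ,
    (∀ μ ∈ M, 0 ≤ r μ) ∧ (∑ μ ∈ M, r μ) = 1 ∧
    c = ∑ μ ∈ M, r μ ^ m * ‖y - μ‖ ^ 2 } with hSy
  have hSynem : Sy.Nonempty := by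
    refine ⟨∑ μ ∈ M, ((M.card : ℝ)⁻¹) ^ m * ‖y - μ‖ ^ 2,
      fun _ => (M.card : ℝ)⁻¹, fun μ _ => by positivity, ?_, rfl⟩
    have hc : (0 : ℝ) < M.card := by
      exact_mod_cast Finset.card_pos.mpr hM
    rw [Finset.sum_const, nsmul_eq_mul, mul_inv_cancel₀ (ne_of_gt hc)]
  have hbdd : BddBelow Sx := ⟨0, fun c hc => pointCost_set_nonneg m M x c hc⟩
  -- key claim
  have key : ∀ c ∈ Sy, sInf Sx ≤ (1 + ε) * c + (1 + 1 / ε) * ‖x - y‖ ^ 2 := by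
    rintro c ⟨r, h0, h1, rfl⟩
    have hmem : (∑ μ ∈ M, r μ ^ m * ‖x - μ‖ ^ 2) ∈ Sx := ⟨r, h0, h1, rfl⟩
    refine (csInf_le hbdd hmem).trans ?_
    have hsumpow : (∑ μ ∈ M, r μ ^ m) ≤ 1 := by
      rw [← h1]
      apply Finset.sum_le_sum
      intro μ hμ
      rcases eq_or_lt_of_le (h0 μ hμ) with h | h
      · rw [← h, Real.zero_rpow (by linarith : m ≠ 0)]
      · have hle1 : r μ ≤ 1 := by
          rw [← h1]
          exact Finset.single_le_sum (fun i hi => h0 i hi) hμ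
        calc r μ ^ m ≤ r μ ^ (1 : ℝ) :=
              Real.rpow_le_rpow_of_exponent_ge h hle1 (le_of_lt hm)
          _ = r μ := Real.rpow_one _
    have step : ∀ μ ∈ M, r μ ^ m * ‖x - μ‖ ^ 2 ≤
        r μ ^ m * ((1 + ε) * ‖y - μ‖ ^ 2) + r μ ^ m * ((1 + 1 / ε) * ‖x - y‖ ^ 2) := by
      intro μ hμ
      have hr : 0 ≤ r μ ^ m := Real.rpow_nonneg (h0 μ hμ) m
      have htri : ‖x - μ‖ ≤ ‖x - y‖ + ‖y - μ‖ := by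
        have := norm_sub_le_norm_sub_add_norm_sub x y μ
        linarith
      have hsq : ‖x - μ‖ ^ 2 ≤ (1 + ε) * ‖y - μ‖ ^ 2 + (1 + 1 / ε) * ‖x - y‖ ^ 2 := by
        have hxm : (0:ℝ) ≤ ‖x - μ‖ := norm_nonneg _
        have hxy : (0:ℝ) ≤ ‖x - y‖ := norm_nonneg _
        have hym : (0:ℝ) ≤ ‖y - μ‖ := norm_nonneg _
        have h1' : ‖x - μ‖ ^ 2 ≤ (‖x - y‖ + ‖y - μ‖) ^ 2 := by nlinarith
        have hamgm : 2 * ‖x - y‖ * ‖y - μ‖ ≤ (1/ε) * ‖x - y‖^2 + ε * ‖y - μ‖^2 := by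
          have h2 : ε * (2 * ‖x - y‖ * ‖y - μ‖) ≤
              ε * ((1/ε) * ‖x - y‖^2 + ε * ‖y - μ‖^2) := by
            have heq : ε * ((1/ε) * ‖x - y‖^2 + ε * ‖y - μ‖^2)
                = ‖x - y‖^2 + ε^2 * ‖y - μ‖^2 := by
              field_simp
            rw [heq]
            nlinarith [sq_nonneg (‖x - y‖ - ε * ‖y - μ‖)]
          exact le_of_mul_le_mul_left h2 hε
        nlinarith
      nlinarith [mul_le_mul_of_nonneg_left hsq hr]
    calc (∑ μ ∈ M, r μ ^ m * ‖x - μ‖ ^ 2)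
        ≤ ∑ μ ∈ M, (r μ ^ m * ((1 + ε) * ‖y - μ‖ ^ 2)
            + r μ ^ m * ((1 + 1 / ε) * ‖x - y‖ ^ 2)) := Finset.sum_le_sum step
      _ = (1 + ε) * (∑ μ ∈ M, r μ ^ m * ‖y - μ‖ ^ 2)
            + (1 + 1 / ε) * ‖x - y‖ ^ 2 * (∑ μ ∈ M, r μ ^ m) := by
          rw [Finset.sum_add_distrib, Finset.mul_sum, Finset.mul_sum]
          congr 1 <;> apply Finset.sum_congr rfl <;> intro μ _ <;> ring
      _ ≤ (1 + ε) * (∑ μ ∈ M, r μ ^ m * ‖y - μ‖ ^ 2) + (1 + 1 / ε) * ‖x - y‖ ^ 2 := by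
          have hK : 0 ≤ (1 + 1 / ε) * ‖x - y‖ ^ 2 := by positivity
          nlinarith
  -- conclude
  have h1ε : (0:ℝ) < 1 + ε := by linarith
  have : (sInf Sx - (1 + 1 / ε) * ‖x - y‖ ^ 2) / (1 + ε) ≤ sInf Sy := by
    apply le_csInf hSynem
    intro c hc
    rw [div_le_iff₀ h1ε]
    have := key c hc
    linarith [key c hc, mul_comm c (1 + ε)]
  unfold pointCost
  rw [← hSx, ← hSy]
  rw [div_le_iff₀ h1ε] at this
  nlinarith [this]

theorem fuzzy_cost_comparison {D N : ℕ} (m : ℝ) (hm : 1 < m)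
    (x y : Fin N → EuclideanSpace ℝ (Fin D))
    (M : Finset (EuclideanSpace ℝ (Fin D))) (hM : M.Nonempty)
    (ε : ℝ) (hε : ε ∈ Set.Ioc (0 : ℝ) 1) :
    |(∑ n, pointCost m M (x n)) - ∑ n, pointCost m M (y n)| ≤
      (1 + 1 / ε) * ∑ n, ‖x n - y n‖ ^ 2 +
        ε * min (∑ n, pointCost m M (x n)) (∑ n, pointCost m M (y n)) := by
  obtain ⟨hε0, hε1⟩ := hε
  set A := ∑ n, pointCost m M (x n) with hA
  set B := ∑ n, pointCost m M (y n) with hB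
  set S := ∑ n, ‖x n - y n‖ ^ 2 with hS
  have hAnn : 0 ≤ A := Finset.sum_nonneg fun n _ => pointCost_nonneg m M (x n)
  have hBnn : 0 ≤ B := Finset.sum_nonneg fun n _ => pointCost_nonneg m M (y n)
  have hSnn : 0 ≤ S := Finset.sum_nonneg fun n _ => by positivity
  have hAB : A ≤ (1 + ε) * B + (1 + 1 / ε) * S := by
    rw [hA, hB, hS, Finset.mul_sum, Finset.mul_sum, ← Finset.sum_add_distrib]
    exact Finset.sum_le_sum fun n _ => pointCost_le m hm M hM (x n) (y n) ε hε0
  have hBA : B ≤ (1 + ε) * A + (1 + 1 / ε) * S := by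
    rw [hA, hB, Finset.mul_sum, Finset.mul_sum, ← Finset.sum_add_distrib]
    refine Finset.sum_le_sum fun n _ => ?_
    have := pointCost_le m hm M hM (y n) (x n) ε hε0
    rwa [norm_sub_rev] at this
  have hK : 0 ≤ (1 + 1 / ε) * S := by positivity
  rw [abs_sub_le_iff]
  rcases le_total A B with h | h
  · rw [min_eq_left h]
    constructor <;> nlinarith
  · rw [min_eq_right h]
    constructor <;> nlinarith
end

section
/- Let r : X × [K] → [0,1] be any membership function (Σ_k r(x,k) = 1 for each x). Then for any weight function w : X → ℕ and any finite set of at most K means M ⊂ ℝ^D, the K-means cost satisfies km(X, w, M) ≤ K^{m−1} · φ(X, w, M), where km(X, w, M) = Σ_x w(x) d(x, M)² and φ(X, w, M) = Σ_x w(x) Σ_k r*(x,k)^m ‖x − μ_k‖² with r* the optimal membership induced by M. -/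
open scoped BigOperators

theorem kmeans_le_pow_mul_fuzzy {D : ℕ} (m : ℝ) (hm : 1 < m) (K : ℕ)
    (X M : Finset (EuclideanSpace ℝ (Fin D))) (hM : M.Nonempty) (hK : M.card ≤ K)
    (w : EuclideanSpace ℝ (Fin D) → ℕ)
    (r : EuclideanSpace ℝ (Fin D) → EuclideanSpace ℝ (Fin D) → ℝ)
    (hr : ∀ x ∈ X, (∀ μ ∈ M, 0 ≤ r x μ) ∧ (∑ μ ∈ M, r x μ) = 1) :
    (∑ x ∈ X, (w x : ℝ) * (M.inf' hM fun μ => ‖x - μ‖) ^ 2) ≤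
      (K : ℝ) ^ (m - 1) * ∑ x ∈ X, (w x : ℝ) * pointCost m M x := by
  have hn : 0 < M.card := Finset.card_pos.mpr hM
  have hc : (0:ℝ) < M.card := by exact_mod_cast hn
  have hK0 : (0:ℝ) < K := by exact_mod_cast lt_of_lt_of_le hn hK
  rw [Finset.mul_sum]
  refine Finset.sum_le_sum fun x hx => ?_
  set d : ℝ := M.inf' hM fun μ => ‖x - μ‖ with hd
  have hd0 : 0 ≤ d := by
    obtain ⟨μ, hμ, h⟩ := Finset.exists_mem_eq_inf' hM fun μ => ‖x - μ‖
    rw [hd, h]; positivity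
  rw [← mul_assoc, mul_comm ((K:ℝ) ^ (m-1)) ((w x : ℝ)), mul_assoc]
  refine mul_le_mul_of_nonneg_left ?_ (by positivity)
  -- every element of the set is at least d^2 * K^(1-m)
  have key : ∀ c ∈ { c : ℝ | ∃ r : EuclideanSpace ℝ (Fin D) → ℝ,
      (∀ μ ∈ M, 0 ≤ r μ) ∧ (∑ μ ∈ M, r μ) = 1 ∧
      c = ∑ μ ∈ M, r μ ^ m * ‖x - μ‖ ^ 2 }, d ^ 2 * (K:ℝ) ^ (1 - m) ≤ c := by
    rintro c ⟨s, hs0, hs1, rfl⟩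
    have hJ : ((M.card : ℝ))⁻¹ ^ m ≤ ((M.card : ℝ))⁻¹ * ∑ μ ∈ M, s μ ^ m := by
      have := Real.rpow_arith_mean_le_arith_mean_rpow M
        (fun _ => ((M.card : ℝ))⁻¹) s (fun i _ => by positivity)
        (by simp [Finset.sum_const, mul_inv_cancel₀ hc.ne'])
        (fun i hi => hs0 i hi) hm.le
      simpa [← Finset.mul_sum, hs1] using this
    have hsum : (M.card : ℝ) ^ (1 - m) ≤ ∑ μ ∈ M, s μ ^ m := by
      have h2 : (M.card : ℝ) * ((M.card : ℝ))⁻¹ ^ m ≤ ∑ μ ∈ M, s μ ^ m := by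
        calc (M.card : ℝ) * ((M.card : ℝ))⁻¹ ^ m
            ≤ (M.card : ℝ) * (((M.card : ℝ))⁻¹ * ∑ μ ∈ M, s μ ^ m) :=
              mul_le_mul_of_nonneg_left hJ hc.le
          _ = ∑ μ ∈ M, s μ ^ m := by
              rw [← mul_assoc, mul_inv_cancel₀ hc.ne', one_mul]
      calc (M.card : ℝ) ^ (1 - m)
          = (M.card : ℝ) * ((M.card : ℝ))⁻¹ ^ m := by
            rw [Real.inv_rpow hc.le, Real.rpow_sub hc, Real.rpow_one, div_eq_mul_inv]
        _ ≤ _ := h2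
    have hKn : (K:ℝ) ^ (1 - m) ≤ (M.card : ℝ) ^ (1 - m) :=
      Real.rpow_le_rpow_of_nonpos hc (by exact_mod_cast hK) (by linarith)
    have hterm : d ^ 2 * ∑ μ ∈ M, s μ ^ m ≤ ∑ μ ∈ M, s μ ^ m * ‖x - μ‖ ^ 2 := by
      rw [Finset.mul_sum]
      refine Finset.sum_le_sum fun μ hμ => ?_
      rw [mul_comm]
      refine mul_le_mul_of_nonneg_left ?_ (Real.rpow_nonneg (hs0 μ hμ) m)
      have : d ≤ ‖x - μ‖ := Finset.inf'_le _ hμ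
      exact pow_le_pow_left₀ hd0 this 2
    calc d ^ 2 * (K:ℝ) ^ (1 - m) ≤ d ^ 2 * ∑ μ ∈ M, s μ ^ m := by
          refine mul_le_mul_of_nonneg_left (hKn.trans hsum) (by positivity)
      _ ≤ _ := hterm
  have hpc : d ^ 2 * (K:ℝ) ^ (1 - m) ≤ pointCost m M x := by
    refine le_csInf ⟨_, r x, (hr x hx).1, (hr x hx).2, rfl⟩ key
  calc d ^ 2 = (K:ℝ) ^ (m - 1) * (d ^ 2 * (K:ℝ) ^ (1 - m)) := by
        rw [mul_comm ((K:ℝ) ^ (m-1)), mul_assoc, ← Real.rpow_add hK0]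
        norm_num
    _ ≤ (K:ℝ) ^ (m - 1) * pointCost m M x :=
        mul_le_mul_of_nonneg_left hpc (by positivity)
end

section
/- Let X ⊂ ℝ^D be finite, w : X → ℕ₊ a weight function, and C ⊆ X nonempty. Then for any ε > 0 there exists a multiset S of points of X (i.e., a function counting multiplicities) of size ⌈2/ε⌉ such that ‖μ_1(S) − μ_w(C)‖² ≤ ε · km(C, w)/w(C), where μ_w(C) = Σ_{x∈C} w(x)x / w(C), μ_1(S) is the unweighted mean of S, and km(C,w) = Σ_{x∈C} w(x)‖x − μ_w(C)‖². -/
open scoped RealInnerProductSpace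

/-!
Sample `n = ⌈2/ε⌉₊` points of `C` independently, each with probability `w x / w(C)`. The
deviations `x - μ_w(C)` are centred, so in `E ‖∑ᵢ (xᵢ - μ)‖²` all cross terms vanish and it
equals `n` times the weighted variance `km / w(C)`. Hence the sample mean has expected squared
error `km / (n w(C)) ≤ ε km / w(C)`, and some tuple does no worse than the average. The
expectation is written out as a finite sum over tuples `Fin n → C` with product weights.
-/

namespace Inaba

variable {α E : Type*} [Fintype α] [NormedAddCommGroup E] [InnerProductSpace ℝ E]

theorem sum_pi_prod_eq_one {p : α → ℝ} (hp : ∑ a, p a = 1) (n : ℕ) :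
    ∑ g : Fin n → α, ∏ i, p (g i) = 1 := by
  rw [← Fintype.sum_pow, hp, one_pow]

theorem sum_mul_norm_add_sq {p : α → ℝ} {v : α → E} (hp : ∑ a, p a = 1)
    (hv : ∑ a, p a • v a = 0) (t : E) :
    ∑ a, p a * ‖v a + t‖ ^ 2 = ∑ a, p a * ‖v a‖ ^ 2 + ‖t‖ ^ 2 := by
  have hcross : ∑ a, p a * (2 * ⟪v a, t⟫) = 0 :=
    calc ∑ a, p a * (2 * ⟪v a, t⟫) = 2 * ⟪∑ a, p a • v a, t⟫ := by
          simp only [sum_inner, real_inner_smul_left, Finset.mul_sum]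
          exact Finset.sum_congr rfl fun a _ => by ring
      _ = 0 := by rw [hv, inner_zero_left, mul_zero]
  simp_rw [norm_add_sq_real, mul_add, Finset.sum_add_distrib, hcross, ← Finset.sum_mul, hp,
    add_zero, one_mul]

theorem sum_pi_prod_mul_norm_sum_sq {p : α → ℝ} {v : α → E} (hp : ∑ a, p a = 1)
    (hv : ∑ a, p a • v a = 0) (n : ℕ) :
    ∑ g : Fin n → α, (∏ i, p (g i)) * ‖∑ i, v (g i)‖ ^ 2 = n * ∑ a, p a * ‖v a‖ ^ 2 := by
  induction n with
  | zero => simp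
  | succ n ih =>
    rw [← (Fin.consEquiv fun _ => α).sum_comp, Fintype.sum_prod_type, Finset.sum_comm]
    simp only [Fin.consEquiv_apply, Fin.prod_univ_succ, Fin.sum_univ_succ, Fin.cons_zero,
      Fin.cons_succ]
    calc ∑ g : Fin n → α, ∑ a, p a * (∏ i, p (g i)) * ‖v a + ∑ i, v (g i)‖ ^ 2
        = ∑ g : Fin n → α, (∏ i, p (g i)) * (∑ a, p a * ‖v a‖ ^ 2 + ‖∑ i, v (g i)‖ ^ 2) := by
          refine Finset.sum_congr rfl fun g _ => ?_
          rw [← sum_mul_norm_add_sq hp hv, Finset.mul_sum]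
          exact Finset.sum_congr rfl fun a _ => by ring
      _ = (n + 1 : ℕ) * ∑ a, p a * ‖v a‖ ^ 2 := by
          simp_rw [mul_add, Finset.sum_add_distrib, ← Finset.sum_mul, sum_pi_prod_eq_one hp, ih]
          push_cast
          ring

theorem exists_le_of_sum_mul_eq {ι : Type*} [Fintype ι] {q f : ι → ℝ} {c : ℝ}
    (hq : ∀ i, 0 ≤ q i) (hq1 : ∑ i, q i = 1) (hf : ∑ i, q i * f i = c) : ∃ i, f i ≤ c := by
  by_contra! hlt
  obtain ⟨j, -, hj⟩ := Finset.exists_ne_zero_of_sum_ne_zero (hq1 ▸ one_ne_zero : ∑ i, q i ≠ 0)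
  have : ∑ i, q i * c < ∑ i, q i * f i :=
    Finset.sum_lt_sum (fun i _ => mul_le_mul_of_nonneg_left (hlt i).le (hq i))
      ⟨j, Finset.mem_univ j, mul_lt_mul_of_pos_left (hlt j) ((hq j).lt_of_ne' hj)⟩
  rw [← Finset.sum_mul, hq1, one_mul, hf] at this
  exact this.false

theorem exists_norm_mean_sub_sq_le {p : α → ℝ} (hp0 : ∀ a, 0 ≤ p a) (hp : ∑ a, p a = 1)
    (x : α → E) {n : ℕ} (hn : 0 < n) :
    ∃ g : Fin n → α, ‖(n : ℝ)⁻¹ • ∑ i, x (g i) - ∑ a, p a • x a‖ ^ 2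
      ≤ (∑ a, p a * ‖x a - ∑ b, p b • x b‖ ^ 2) / n := by
  set μ := ∑ b, p b • x b
  have hv : ∑ a, p a • (x a - μ) = 0 := by
    rw [Finset.sum_congr rfl fun a _ => smul_sub (p a) (x a) μ, Finset.sum_sub_distrib,
      ← Finset.sum_smul, hp, one_smul, sub_self]
  obtain ⟨g, hg⟩ := exists_le_of_sum_mul_eq (fun g => Finset.prod_nonneg fun i _ => hp0 (g i))
    (sum_pi_prod_eq_one hp n) (sum_pi_prod_mul_norm_sum_sq hp hv n)
  refine ⟨g, ?_⟩
  have hnR : (0 : ℝ) < n := Nat.cast_pos.mpr hn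
  have hmean : (n : ℝ)⁻¹ • ∑ i, x (g i) - μ = (n : ℝ)⁻¹ • ∑ i, (x (g i) - μ) := by
    rw [Finset.sum_sub_distrib, smul_sub, Finset.sum_const, Finset.card_univ, Fintype.card_fin,
      ← Nat.cast_smul_eq_nsmul ℝ, smul_smul, inv_mul_cancel₀ hnR.ne', one_smul]
  rw [hmean, norm_smul, mul_pow, Real.norm_of_nonneg (inv_nonneg.mpr hnR.le)]
  calc (n : ℝ)⁻¹ ^ 2 * ‖∑ i, (x (g i) - μ)‖ ^ 2
      ≤ (n : ℝ)⁻¹ ^ 2 * (n * ∑ a, p a * ‖x a - μ‖ ^ 2) := by gcongr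
    _ = (∑ a, p a * ‖x a - μ‖ ^ 2) / n := by field_simp

end Inaba

theorem inaba_derandomized {D : ℕ} (X : Finset (EuclideanSpace ℝ (Fin D)))
    (w : EuclideanSpace ℝ (Fin D) → ℕ) (hw : ∀ x ∈ X, 0 < w x)
    (C : Finset (EuclideanSpace ℝ (Fin D))) (hC : C ⊆ X) (hCne : C.Nonempty)
    (ε : ℝ) (hε : 0 < ε) :
    let wC : ℝ := ∑ x ∈ C, (w x : ℝ)
    let μwC : EuclideanSpace ℝ (Fin D) := wC⁻¹ • ∑ x ∈ C, (w x : ℝ) • x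
    let km : ℝ := ∑ x ∈ C, (w x : ℝ) * ‖x - μwC‖ ^ 2
    ∃ S : Multiset (EuclideanSpace ℝ (Fin D)),
      (∀ s ∈ S, s ∈ C) ∧ Multiset.card S = ⌈(2 : ℝ) / ε⌉₊ ∧
        ‖(Multiset.card S : ℝ)⁻¹ • S.sum - μwC‖ ^ 2 ≤ ε * (km / wC) := by
  intro wC μwC km
  have hwC : 0 < wC := Finset.sum_pos (fun x hx => Nat.cast_pos.mpr (hw x (hC hx))) hCne
  set n := ⌈(2 : ℝ) / ε⌉₊
  have hn : 0 < n := Nat.ceil_pos.mpr (by positivity)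
  have hp : ∑ a : C, (w a : ℝ) / wC = 1 := by
    rw [← Finset.sum_div, Finset.sum_coe_sort C fun x => (w x : ℝ), div_self hwC.ne']
  have hμ : ∑ a : C, ((w a : ℝ) / wC) • (a : EuclideanSpace ℝ (Fin D)) = μwC := by
    simp_rw [div_eq_inv_mul, mul_smul, ← Finset.smul_sum]
    rw [Finset.sum_coe_sort C fun x => (w x : ℝ) • x]
  have hvar : ∑ a : C, (w a : ℝ) / wC * ‖(a : EuclideanSpace ℝ (Fin D)) - μwC‖ ^ 2 = km / wC := by
    simp_rw [div_mul_eq_mul_div, ← Finset.sum_div]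
    rw [Finset.sum_coe_sort C fun x => (w x : ℝ) * ‖x - μwC‖ ^ 2]
  obtain ⟨g, hg⟩ := Inaba.exists_norm_mean_sub_sq_le (fun a => by positivity) hp Subtype.val hn
  rw [hμ, hvar] at hg
  refine ⟨Finset.univ.val.map fun i => (g i : EuclideanSpace ℝ (Fin D)), ?_, by simp, ?_⟩
  · simp
  · have hinv : (n : ℝ)⁻¹ ≤ ε := by
      rw [inv_le_comm₀ (by positivity) hε]
      calc ε⁻¹ ≤ 2 / ε := by rw [inv_eq_one_div]; gcongr; norm_num
        _ ≤ n := Nat.le_ceil _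
    simp only [Multiset.card_map, Finset.card_val, Finset.card_univ, Fintype.card_fin]
    calc _ ≤ km / wC / n := hg
      _ ≤ ε * (km / wC) := by
        rw [div_eq_inv_mul]
        gcongr
end
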